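/- Let E = (C₂)^n with n ≥ 2, k = F₂, and let Ω²F₂ ⊆ P = (F₂E)^n be the kernel of ψ(aᵢ) = ρᵢ = σᵢ − 1. Let a = ρₙρ_{n−1}⋯ρ₂·a₁ ∈ P, and M = Ω²F₂ + F₂·a. Then: (i) a ∉ Ω²F₂, so M is an F₂E-submodule of P strictly containing Ω²F₂ with dim M = dim Ω²F₂ + 1; (ii) the map η : M → F₂ with η(Ω²F₂) = 0 and η(a) = 1 is a well-defined surjective F₂E-homomorphism; (iii) the short exact sequence 0 → Ω²F₂ → M →^η F₂ → 0 does not split. -/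

import Mathlib

/-!
In characteristic 2 each `ρᵢ = σᵢ + 1` squares to zero, so
`N = ρ₁ ⋯ ρₙ = ∏ (1 + σᵢ) = ∑_{g ∈ E} g` is killed by every `ρᵢ`, i.e. it is `E`-fixed.
Hence `r • N = ε(r) • N` for the augmentation `ε`, and `N` has coefficient `1` at the identity.
Since `ψ(a) = N ≠ 0` we get `a ∉ Ω²F₂`; moreover `r • a ≡ ε(r) • a` modulo `Ω²F₂`, so
`M = Ω²F₂ ⊕ F₂ a` as `F₂`-spaces. The map `ψ` sends `M` into the `E`-fixed points of `F₂E`,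
on which the coefficient at the identity is an `F₂E`-linear map to the trivial module; this
composite is `η`.
A splitting would give an `E`-fixed `m ∈ M` with `η(m) = 1`, but every `E`-fixed `x ∈ P` has
`ψ(x) = ∑ⱼ ρⱼ xⱼ = 0`.
-/

/-- The elementary abelian `2`-group of rank `n`. -/
abbrev Egrp (n : ℕ) : Type := Multiplicative (Fin n → ZMod 2)

/-- The group algebra `F₂E`. -/
abbrev F2E (n : ℕ) : Type := MonoidAlgebra (ZMod 2) (Egrp n)

/-- The generator `σᵢ` of `E` inside the group algebra. -/
noncomputable abbrev sigmaE (n : ℕ) (i : Fin n) : F2E n :=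
  MonoidAlgebra.of (ZMod 2) (Egrp n) (Multiplicative.ofAdd (Pi.single i 1))

/-- `ρᵢ = σᵢ - 1`. -/
noncomputable abbrev rhoE (n : ℕ) (i : Fin n) : F2E n := sigmaE n i - 1

/-- The augmentation map `F₂E → F₂`, sending every group element to `1`. -/
noncomputable abbrev augE (n : ℕ) : F2E n →ₐ[ZMod 2] ZMod 2 :=
  MonoidAlgebra.lift (ZMod 2) (ZMod 2) (Egrp n) 1

/-- `F₂` with the trivial `F₂E`-action (via the augmentation). -/
def TrivF2 (n : ℕ) : Type := ZMod 2

instance (n : ℕ) : AddCommGroup (TrivF2 n) := inferInstanceAs (AddCommGroup (ZMod 2))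
instance (n : ℕ) : One (TrivF2 n) := inferInstanceAs (One (ZMod 2))
instance (n : ℕ) : Zero (TrivF2 n) := inferInstanceAs (Zero (ZMod 2))
noncomputable instance (n : ℕ) : Module (F2E n) (TrivF2 n) :=
  Module.compHom (ZMod 2) ((augE n).toRingHom)

/-- The element `a = ρₙ ρ_{n-1} ⋯ ρ₂ a₁` of `P = (F₂E)ⁿ`. -/
noncomputable def aElt (n : ℕ) (hn : 2 ≤ n) : Fin n → F2E n :=
  (∏ i ∈ Finset.univ.erase (⟨0, by omega⟩ : Fin n), rhoE n i) •
    (Pi.single (⟨0, by omega⟩ : Fin n) 1 : Fin n → F2E n)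

open Finset MonoidAlgebra

namespace MonoidAlgebra

variable {k G : Type*} [CommSemiring k] [Group G]

theorem mul_eq_lift_smul_of_forall_of_mul_eq {x : MonoidAlgebra k G}
    (hx : ∀ g, of k G g * x = x) (r : MonoidAlgebra k G) : r * x = lift k k G 1 r • x := by
  induction r using MonoidAlgebra.induction_on with
  | of g => rw [hx g, lift_of, MonoidHom.one_apply, one_smul]
  | add r s hr hs => rw [add_mul, hr, hs, map_add, add_smul]
  | smul c r hr => rw [smul_mul_assoc, hr, map_smul, smul_assoc]

end MonoidAlgebra

namespace Submodule

variable {k A V : Type*} [Field k] [Ring A] [Algebra k A] [AddCommGroup V] [Module A V]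
  [Module k V] [IsScalarTower k A V] [Module.Finite k V]

theorem finrank_sup_span_singleton_of_forall_smul_sub_mem {p : Submodule A V} {v : V}
    (hv : v ∉ p) (hsmul : ∀ r : A, ∃ c : k, r • v - c • v ∈ p) :
    Module.finrank k (p ⊔ span A {v} : Submodule A V) = Module.finrank k p + 1 := by
  have hres : (p ⊔ span A {v}).restrictScalars k = p.restrictScalars k ⊔ span k {v} := by
    refine le_antisymm (fun x hx => ?_) (sup_le (fun x hx => mem_sup_left hx) ?_)
    · obtain ⟨y, hy, z, hz, rfl⟩ := mem_sup.mp hx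
      obtain ⟨r, rfl⟩ := mem_span_singleton.mp hz
      obtain ⟨c, hc⟩ := hsmul r
      rw [show y + r • v = (y + (r • v - c • v)) + c • v by abel]
      exact add_mem (mem_sup_left (add_mem hy hc))
        (mem_sup_right (mem_span_singleton.mpr ⟨c, rfl⟩))
    · rw [span_le, Set.singleton_subset_iff]
      exact mem_sup_right (mem_span_singleton_self v)
  exact (congrArg (fun q : Submodule k V => Module.finrank k q) hres).trans
    (finrank_sup_span_singleton (p := p.restrictScalars k) hv)

end Submodule

section ElementaryAbelian

instance (n : ℕ) : CharP (F2E n) 2 := charP_of_injective_algebraMap' (ZMod 2) 2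

variable {n : ℕ}

theorem rhoE_mul_self (i : Fin n) : rhoE n i * rhoE n i = 0 := by
  have hσ : sigmaE n i * sigmaE n i = 1 := by
    rw [← map_mul, ← ofAdd_add, ← Pi.single_add, CharTwo.add_self_eq_zero, Pi.single_zero,
      ofAdd_zero, map_one]
  rw [rhoE, CharTwo.sub_eq_add, CharTwo.add_mul_self, hσ, one_mul, CharTwo.add_self_eq_zero]

theorem augE_rhoE (i : Fin n) : augE n (rhoE n i) = 0 := by
  rw [map_sub, map_one, lift_of, MonoidHom.one_apply, sub_self]

def invariantsE (n : ℕ) : Submodule (F2E n) (F2E n) where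
  carrier := {x | ∀ i, rhoE n i * x = 0}
  add_mem' hx hy i := by rw [mul_add, hx i, hy i, add_zero]
  zero_mem' i := mul_zero _
  smul_mem' r x hx i := by rw [smul_eq_mul, mul_left_comm, hx i, mul_zero]

theorem of_mul_eq_self_of_mem_invariantsE {x : F2E n} (hx : x ∈ invariantsE n) (g : Egrp n) :
    of (ZMod 2) (Egrp n) g * x = x := by
  obtain ⟨f, rfl⟩ : ∃ f, Multiplicative.ofAdd f = g := ⟨g.toAdd, rfl⟩
  induction f using Pi.single_induction with
  | zero => exact one_mul x
  | add f f' hf hf' => rw [ofAdd_add, map_mul, mul_assoc, hf', hf]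
  | single i c =>
    rcases (by decide : ∀ c : ZMod 2, c = 0 ∨ c = 1) c with rfl | rfl
    · rw [Pi.single_zero, ofAdd_zero, map_one, one_mul]
    · have := hx i
      rwa [rhoE, sub_mul, one_mul, sub_eq_zero] at this

theorem coeff_one_prod_sigmaE {t : Finset (Fin n)} (ht : t.Nonempty) :
    (∏ i ∈ t, sigmaE n i).coeff 1 = 0 := by
  classical
  obtain ⟨j, hj⟩ := ht
  have hne : Multiplicative.ofAdd (∑ i ∈ t, Pi.single i (1 : ZMod 2)) ≠ 1 := fun h => by
    simpa [sum_pi_single', hj] using congrFun (congrArg Multiplicative.toAdd h) j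
  rw [← map_prod, ← ofAdd_sum, of_apply, coeff_single, Finsupp.single_eq_of_ne hne.symm]

theorem coeff_one_prod_rhoE (s : Finset (Fin n)) : (∏ i ∈ s, rhoE n i).coeff 1 = 1 := by
  simp_rw [rhoE, CharTwo.sub_eq_add]
  rw [prod_add_one, coeff_sum, sum_apply', sum_eq_single_of_mem ∅ (empty_mem_powerset s)]
  · simp
  · exact fun t _ ht => coeff_one_prod_sigmaE (nonempty_iff_ne_empty.mpr ht)

noncomputable def normE (n : ℕ) : F2E n := ∏ i, rhoE n i

theorem normE_mem_invariantsE : normE n ∈ invariantsE n := fun i => by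
  rw [normE, ← mul_prod_erase univ _ (mem_univ i), ← mul_assoc, rhoE_mul_self, zero_mul]

theorem coeff_one_normE : (normE n).coeff 1 = 1 := coeff_one_prod_rhoE univ

theorem normE_ne_zero : normE n ≠ 0 := fun h => by
  simpa [h] using coeff_one_normE (n := n)

theorem mul_eq_augE_smul_of_mem_invariantsE {x : F2E n} (hx : x ∈ invariantsE n) (r : F2E n) :
    r * x = augE n r • x :=
  mul_eq_lift_smul_of_forall_of_mul_eq (of_mul_eq_self_of_mem_invariantsE hx) r

theorem rhoE_smul_trivF2 (i : Fin n) (c : TrivF2 n) : rhoE n i • c = 0 := by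
  show augE n (rhoE n i) * (show ZMod 2 from c) = 0
  rw [augE_rhoE, zero_mul]

noncomputable def coeffOneInvariantsE (n : ℕ) : invariantsE n →ₗ[F2E n] TrivF2 n where
  toFun x := (x : F2E n).coeff 1
  map_add' x y := by rw [Submodule.coe_add, coeff_add, Finsupp.add_apply]; rfl
  map_smul' r x := by
    show (r * (x : F2E n)).coeff 1 = augE n r * (x : F2E n).coeff 1
    rw [mul_eq_augE_smul_of_mem_invariantsE x.2, coeff_smul_apply, smul_eq_mul]

end ElementaryAbelian

section Syzygy

variable {n : ℕ} {ψ : (Fin n → F2E n) →ₗ[F2E n] F2E n}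

theorem apply_eq_sum_mul_rhoE (hψ : ∀ i, ψ (Pi.single i 1) = rhoE n i) (x : Fin n → F2E n) :
    ψ x = ∑ j, x j * rhoE n j := by
  conv_lhs => rw [← univ_sum_single x]
  refine (map_sum ψ _ _).trans (sum_congr rfl fun j _ => ?_)
  rw [← hψ, ← smul_eq_mul, ← map_smul, ← Pi.single_smul', smul_eq_mul, mul_one]

theorem apply_eq_zero_of_forall_rhoE_smul_eq_zero (hψ : ∀ i, ψ (Pi.single i 1) = rhoE n i)
    {x : Fin n → F2E n} (hx : ∀ i, rhoE n i • x = 0) : ψ x = 0 := by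
  rw [apply_eq_sum_mul_rhoE hψ]
  refine sum_eq_zero fun j _ => ?_
  rw [mul_comm, ← smul_eq_mul, ← Pi.smul_apply, hx j, Pi.zero_apply]

theorem apply_aElt (hψ : ∀ i, ψ (Pi.single i 1) = rhoE n i) (hn : 2 ≤ n) :
    ψ (aElt n hn) = normE n := by
  rw [aElt, map_smul, hψ, smul_eq_mul, prod_erase_mul univ _ (mem_univ _), normE]

theorem aElt_notMem_ker (hψ : ∀ i, ψ (Pi.single i 1) = rhoE n i) (hn : 2 ≤ n) :
    aElt n hn ∉ LinearMap.ker ψ := by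
  rw [LinearMap.mem_ker, apply_aElt hψ]
  exact normE_ne_zero

theorem smul_aElt_sub_augE_smul_mem_ker (hψ : ∀ i, ψ (Pi.single i 1) = rhoE n i) (hn : 2 ≤ n)
    (r : F2E n) : r • aElt n hn - augE n r • aElt n hn ∈ LinearMap.ker ψ := by
  rw [LinearMap.mem_ker, map_sub, map_smul, LinearMap.map_smul_of_tower, apply_aElt hψ,
    smul_eq_mul, mul_eq_augE_smul_of_mem_invariantsE normE_mem_invariantsE, sub_self]

theorem sup_span_aElt_le_comap_invariantsE (hψ : ∀ i, ψ (Pi.single i 1) = rhoE n i)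
    (hn : 2 ≤ n) :
    LinearMap.ker ψ ⊔ Submodule.span (F2E n) {aElt n hn} ≤ (invariantsE n).comap ψ := by
  refine sup_le (LinearMap.ker_le_comap ψ) ((Submodule.span_singleton_le_iff_mem _ _).mpr ?_)
  rw [Submodule.mem_comap, apply_aElt hψ]
  exact normE_mem_invariantsE

end Syzygy

/-- With `Ω²F₂ = ker ψ ⊆ P = (F₂E)ⁿ` and `a = ρₙ⋯ρ₂a₁`, set `M = Ω²F₂ + F₂·a`.
Then (i) `a ∉ Ω²F₂` and `dim M = dim Ω²F₂ + 1`; (ii) there is a surjective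
`F₂E`-homomorphism `η : M → F₂` (trivial action) killing `Ω²F₂` and with `η(a) = 1`;
(iii) the resulting short exact sequence `0 → Ω²F₂ → M → F₂ → 0` does not split. -/
theorem stmt_16 (n : ℕ) (hn : 2 ≤ n) (ψ : (Fin n → F2E n) →ₗ[F2E n] F2E n)
    (hψ : ∀ i : Fin n, ψ (Pi.single i 1) = rhoE n i) :
    aElt n hn ∉ LinearMap.ker ψ ∧
    Module.finrank (ZMod 2)
        (LinearMap.ker ψ ⊔ Submodule.span (F2E n) {aElt n hn} : Submodule (F2E n) _) =
      Module.finrank (ZMod 2) (LinearMap.ker ψ) + 1 ∧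
    ∃ η : (LinearMap.ker ψ ⊔ Submodule.span (F2E n) {aElt n hn} :
        Submodule (F2E n) (Fin n → F2E n)) →ₗ[F2E n] TrivF2 n,
      (∀ x : (LinearMap.ker ψ ⊔ Submodule.span (F2E n) {aElt n hn} :
          Submodule (F2E n) (Fin n → F2E n)), (x : Fin n → F2E n) ∈ LinearMap.ker ψ →
        η x = 0) ∧
      η ⟨aElt n hn, Submodule.mem_sup_right (Submodule.mem_span_singleton_self _)⟩ = 1 ∧
      Function.Surjective η ∧
      ¬ ∃ s : TrivF2 n →ₗ[F2E n]
          (LinearMap.ker ψ ⊔ Submodule.span (F2E n) {aElt n hn} :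
            Submodule (F2E n) (Fin n → F2E n)),
          η ∘ₗ s = LinearMap.id := by
  let η := coeffOneInvariantsE n ∘ₗ
    ψ.restrict fun x hx => sup_span_aElt_le_comap_invariantsE hψ hn hx
  have hηa :
      η ⟨aElt n hn, Submodule.mem_sup_right (Submodule.mem_span_singleton_self _)⟩ = 1 := by
    show (ψ (aElt n hn)).coeff 1 = 1
    rw [apply_aElt hψ, coeff_one_normE]
  refine ⟨aElt_notMem_ker hψ hn,
    Submodule.finrank_sup_span_singleton_of_forall_smul_sub_mem (aElt_notMem_ker hψ hn)
      fun r => ⟨augE n r, smul_aElt_sub_augE_smul_mem_ker hψ hn r⟩,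
    η, fun x hx => ?_, hηa, fun c => ?_, ?_⟩
  · show (ψ x).coeff 1 = 0
    rw [LinearMap.mem_ker.mp hx]
    rfl
  · let c' : ZMod 2 := c
    refine ⟨algebraMap (ZMod 2) (F2E n) c' •
      ⟨aElt n hn, Submodule.mem_sup_right (Submodule.mem_span_singleton_self _)⟩, ?_⟩
    rw [map_smul, hηa]
    show augE n (algebraMap (ZMod 2) (F2E n) c') * 1 = c'
    rw [AlgHom.commutes, Algebra.algebraMap_self_apply, mul_one]
  · rintro ⟨s, hs⟩
    have hfixed : ψ (s 1) = 0 := apply_eq_zero_of_forall_rhoE_smul_eq_zero hψ fun i => by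
      rw [← Submodule.coe_smul, ← map_smul, rhoE_smul_trivF2, map_zero, ZeroMemClass.coe_zero]
    have hsplit : (ψ (s 1)).coeff 1 = 1 := LinearMap.congr_fun hs 1
    rw [hfixed] at hsplit
    exact zero_ne_one hsplit
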